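/- Assume the antipode S of A is bijective. If x ∈ (ᴴA)^{⊗n} is A-invariant, then (id^{⊗(n-1)} ⊗ ε)(x) ∈ (ᴴA)^{⊗(n-1)} is H-invariant. -/

import Mathlib

/-!
Applying `id ⊗ ε` to `β_L(a) = 1 ⊗ a` shows `π(a) = ε(a) 1` for `a ∈ ᴴA`. Write `ρ = id ⊗ ε` for
the last-factor counit. For `y ⊗ a` with `a ∈ ᴴA`,
`(ρ ⊗ π) βⁿ⁺¹(y ⊗ a) = ε(a₁) y₍₀₎ ⊗ π(y₍₁₎) π(a₂) = y₍₀₎ ⊗ π(y₍₁₎) π(a) = (id ⊗ π) βⁿ(ρ(y ⊗ a))`,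
so by linearity `(ρ ⊗ π) ∘ βⁿ⁺¹ = (id ⊗ π) ∘ βⁿ ∘ ρ` on `(ᴴA)^{⊗(n+1)}`. For `A`-invariant `x`
the left side is `ρ(x) ⊗ 1`.
-/

open TensorProduct

universe u

variable (k : Type u) [Field k]
variable (A : Type u) [Ring A] [HopfAlgebra k A]
variable (H : Type u) [Ring H] [HopfAlgebra k H]

/-- The left `H`-coaction `β_L = (π ⊗ id) ∘ Δ : A → H ⊗ A` induced by `π : A → H`. -/
noncomputable def betaL (π : A →ₐc[k] H) : A →ₗ[k] H ⊗[k] A :=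
  (TensorProduct.map π.toLinearMap LinearMap.id) ∘ₗ Coalgebra.comul

/-- The right quantum homogeneous space `ᴴA = {a ∈ A : β_L(a) = 1 ⊗ a}`. -/
def HAset (π : A →ₐc[k] H) : Set A := {a : A | betaL k A H π a = (1 : H) ⊗ₜ[k] a}

/-- The `n`-fold tensor power of `A` over `k` (as a bundled `k`-module), left-nested with
`TP 0 = k`. -/
noncomputable def TP : ℕ → ModuleCat.{u} k
  | 0 => ModuleCat.of k k
  | n + 1 => ModuleCat.of k (TP n ⊗[k] A)

/-- The `n`-fold tensor-power coaction
`βⁿ(a₁ ⊗ ⋯ ⊗ aₙ) = a₁₍₁₎ ⊗ ⋯ ⊗ aₙ₍₁₎ ⊗ (a₁₍₂₎⋯aₙ₍₂₎)` (Sweedler notation). -/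
noncomputable def betaN : (n : ℕ) → (TP k A n →ₗ[k] TP k A n ⊗[k] A)
  | 0 => (TensorProduct.mk k k A).flip 1
  | n + 1 =>
      (TensorProduct.map LinearMap.id (LinearMap.mul' k A)) ∘ₗ
      (TensorProduct.tensorTensorTensorComm k (TP k A n) A A A).toLinearMap ∘ₗ
      (TensorProduct.map (betaN n) (Coalgebra.comul (R := k)))

/-- The subspace `(ᴴA)^{⊗n} ⊆ A^{⊗n}`. -/
noncomputable def HApow (π : A →ₐc[k] H) : (n : ℕ) → Submodule k (TP k A n)
  | 0 => ⊤
  | n + 1 =>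
      Submodule.span k
        {z : TP k A n ⊗[k] A |
          ∃ x ∈ HApow π n, ∃ a ∈ HAset k A H π, z = x ⊗ₜ[k] a}

/-- The map `ρₙ = id^{⊗(n-1)} ⊗ ε : A^{⊗n} → A^{⊗(n-1)}`. -/
noncomputable def epsLast (n : ℕ) : TP k A (n + 1) →ₗ[k] TP k A n :=
  (TensorProduct.rid k (TP k A n)).toLinearMap ∘ₗ
    TensorProduct.map LinearMap.id (Coalgebra.counit (R := k))

/-- The map `(id^{⊗(n-1)} ⊗ S) ∘ β^{n-1} : A^{⊗(n-1)} → A^{⊗n}`. -/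
noncomputable def sLast (n : ℕ) : TP k A n →ₗ[k] TP k A (n + 1) :=
  TensorProduct.map LinearMap.id (HopfAlgebra.antipode (R := k)) ∘ₗ betaN k A n

/-- `x ∈ A^{⊗n}` is `A`-invariant if `βⁿ(x) = x ⊗ 1`. -/
def AInvariant (n : ℕ) (x : TP k A n) : Prop := betaN k A n x = x ⊗ₜ[k] (1 : A)

/-- `x ∈ A^{⊗n}` is `H`-invariant if `(id^{⊗n} ⊗ π)(βⁿ(x)) = x ⊗ 1`. -/
def HInvariant (π : A →ₐc[k] H) (n : ℕ) (x : TP k A n) : Prop :=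
  TensorProduct.map LinearMap.id π.toLinearMap (betaN k A n x) = x ⊗ₜ[k] (1 : H)

section

variable {k A H}

theorem map_eq_counit_smul_one_of_mem_HAset (π : A →ₐc[k] H) {a : A}
    (ha : a ∈ HAset k A H π) : π a = Coalgebra.counit (R := k) a • (1 : H) := by
  have hcomm : (TensorProduct.rid k H).toLinearMap ∘ₗ
        (Coalgebra.counit (R := k) (A := A)).lTensor H ∘ₗ π.toLinearMap.rTensor A =
      π.toLinearMap ∘ₗ (TensorProduct.rid k A).toLinearMap ∘ₗ
        (Coalgebra.counit (R := k) (A := A)).lTensor A := by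
    ext b c
    simp
  calc π a = π (TensorProduct.rid k A ((Coalgebra.counit (R := k)).lTensor A
        (Coalgebra.comul a))) := by
        rw [Coalgebra.lTensor_counit_comul, TensorProduct.rid_tmul, one_smul]
    _ = TensorProduct.rid k H ((Coalgebra.counit (R := k)).lTensor H (betaL k A H π a)) :=
        (LinearMap.congr_fun hcomm (Coalgebra.comul a)).symm
    _ = Coalgebra.counit (R := k) a • (1 : H) := by
        rw [show betaL k A H π a = 1 ⊗ₜ[k] a from ha, LinearMap.lTensor_tmul,
          TensorProduct.rid_tmul]

section CounitRight

variable (k A) (M : Type*) [AddCommGroup M] [Module k M]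

noncomputable def counitRight : M ⊗[k] A →ₗ[k] M :=
  (TensorProduct.rid k M).toLinearMap ∘ₗ TensorProduct.map LinearMap.id (Coalgebra.counit (R := k))

variable {k A M}

theorem counitRight_tmul (y : M) (b : A) :
    counitRight k A M (y ⊗ₜ[k] b) = Coalgebra.counit (R := k) b • y := by
  simp [counitRight]

/-- On pure tensors both sides send `(y ⊗ b) ⊗ (c ⊗ d)` to `ε(c) y ⊗ π(b) π(d)`. -/
theorem map_counitRight_comp_tensorTensorTensorComm (π : A →ₐc[k] H) :
    TensorProduct.map (counitRight k A M) π.toLinearMap ∘ₗ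
      TensorProduct.map LinearMap.id (LinearMap.mul' k A) ∘ₗ
      (TensorProduct.tensorTensorTensorComm k M A A A).toLinearMap =
    TensorProduct.map LinearMap.id (LinearMap.mul' k H) ∘ₗ
      (TensorProduct.assoc k M H H).toLinearMap ∘ₗ
      TensorProduct.map (TensorProduct.map LinearMap.id π.toLinearMap)
        (π.toLinearMap ∘ₗ (TensorProduct.lid k A).toLinearMap ∘ₗ
          (Coalgebra.counit (R := k)).rTensor A) := by
  ext y b c d
  simp only [LinearMap.comp_apply, AlgebraTensorModule.curry_apply,
    TensorProduct.curry_apply, LinearMap.coe_restrictScalars, LinearEquiv.coe_coe,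
    TensorProduct.tensorTensorTensorComm_tmul, TensorProduct.map_tmul,
    LinearMap.mul'_apply, LinearMap.id_coe, id_eq, LinearMap.rTensor_tmul,
    TensorProduct.lid_tmul, TensorProduct.assoc_tmul, counitRight_tmul, map_smul,
    show ∀ b, π.toLinearMap b = π b from fun _ => rfl, map_mul, TensorProduct.smul_tmul,
    mul_smul_comm]

theorem map_counitRight_mul_comul_eq_smul (π : A →ₐc[k] H) (u : M ⊗[k] A) {a : A}
    (ha : π a = Coalgebra.counit (R := k) a • (1 : H)) :
    TensorProduct.map (counitRight k A M) π.toLinearMap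
      (TensorProduct.map LinearMap.id (LinearMap.mul' k A)
        (TensorProduct.tensorTensorTensorComm k M A A A (u ⊗ₜ[k] Coalgebra.comul a))) =
    Coalgebra.counit (R := k) a • TensorProduct.map LinearMap.id π.toLinearMap u := by
  have h := LinearMap.congr_fun (map_counitRight_comp_tensorTensorTensorComm π)
    (u ⊗ₜ[k] Coalgebra.comul a)
  simp only [LinearMap.comp_apply, LinearEquiv.coe_coe, TensorProduct.map_tmul] at h
  rw [h, Coalgebra.rTensor_counit_comul, TensorProduct.lid_tmul, one_smul,
    show π.toLinearMap a = π a from rfl, ha, TensorProduct.tmul_smul, map_smul, map_smul]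
  congr 1
  induction TensorProduct.map LinearMap.id π.toLinearMap u using TensorProduct.induction_on with
  | zero => simp
  | tmul y h => simp
  | add v w hv hw => rw [TensorProduct.add_tmul, map_add, map_add, hv, hw]

end CounitRight

theorem epsLast_tmul {m : ℕ} (y : TP k A m) (b : A) :
    epsLast k A m (y ⊗ₜ[k] b) = Coalgebra.counit (R := k) b • y :=
  counitRight_tmul y b

theorem epsLast_mem_HApow (π : A →ₐc[k] H) {m : ℕ} {z : TP k A (m + 1)}
    (hz : z ∈ HApow k A H π (m + 1)) : epsLast k A m z ∈ HApow k A H π m := by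
  rw [HApow] at hz
  induction hz using Submodule.span_induction with
  | mem z hz =>
    obtain ⟨y, hy, a, -, rfl⟩ := hz
    rw [epsLast_tmul]
    exact Submodule.smul_mem _ _ hy
  | zero => simp
  | add u v _ _ hu hv => rw [map_add]; exact Submodule.add_mem _ hu hv
  | smul c u _ hu => rw [map_smul]; exact Submodule.smul_mem _ _ hu

theorem map_epsLast_betaN_succ (π : A →ₐc[k] H) {m : ℕ} {z : TP k A (m + 1)}
    (hz : z ∈ HApow k A H π (m + 1)) :
    TensorProduct.map (epsLast k A m) π.toLinearMap (betaN k A (m + 1) z) =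
      TensorProduct.map LinearMap.id π.toLinearMap (betaN k A m (epsLast k A m z)) := by
  rw [HApow] at hz
  induction hz using Submodule.span_induction with
  | mem z hz =>
    obtain ⟨y, -, a, ha, rfl⟩ := hz
    rw [epsLast_tmul, map_smul, map_smul]
    exact map_counitRight_mul_comul_eq_smul π _ (map_eq_counit_smul_one_of_mem_HAset π ha)
  | zero => simp
  | add u v _ _ hu hv => simp only [map_add, hu, hv]
  | smul c u _ hu => simp only [map_smul, hu]

end

theorem epsLast_HInvariant_of_AInvariant
    (π : A →ₐc[k] H) (m : ℕ)
    (x : TP k A (m + 1)) (hx : x ∈ HApow k A H π (m + 1))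
    (hinv : AInvariant k A (m + 1) x) :
    epsLast k A m x ∈ HApow k A H π m ∧ HInvariant k A H π m (epsLast k A m x) := by
  refine ⟨epsLast_mem_HApow π hx, ?_⟩
  have h := map_epsLast_betaN_succ π hx
  rw [show betaN k A (m + 1) x = x ⊗ₜ[k] (1 : A) from hinv, TensorProduct.map_tmul,
    show π.toLinearMap 1 = 1 from map_one π] at h
  exact h.symm
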